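/- On the 4-point space V = {1,2,3,4} with K given by K(1,1)=K(1,2)=K(2,1)=K(2,3)=K(3,2)=K(3,4)=1/2, K(4,3)=1 (all other entries 0), and g the transposition of 3 and 4, the chain driven by the alternating sequence K_1 = K, K_2(x,y) = K(gx,gy) satisfies K_{0,2n}(4,4) = 1 and K_{0,2n+1}(4,3) = 1 for all n ≥ 0. -/

import Mathlib

open BigOperators Finset

def Kseq {V : Type*} [Fintype V] (K : Matrix V V ℝ) (g : Equiv.Perm V) (i : ℕ) :
    Matrix V V ℝ :=
  Matrix.of fun x y => K ((g ^ (i - 1)) x) ((g ^ (i - 1)) y)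

def Kcomp {V : Type*} [Fintype V] [DecidableEq V] (K : Matrix V V ℝ) (g : Equiv.Perm V) :
    ℕ → Matrix V V ℝ
  | 0 => 1
  | n + 1 => Kcomp K g n * Kseq K g (n + 1)

def tilde {V : Type*} [Fintype V] (K : Matrix V V ℝ) (g : Equiv.Perm V) : Matrix V V ℝ :=
  Matrix.of fun x y => K x (g.symm y)

/-- The kernel of Example 3.5 on the four-point space {1,2,3,4} (here Fin 4,
with 0,1,2,3 standing for the states 1,2,3,4). -/
noncomputable def K4 : Matrix (Fin 4) (Fin 4) ℝ :=
  !![1/2, 1/2, 0, 0;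
     1/2, 0, 1/2, 0;
     0, 1/2, 0, 1/2;
     0, 0, 1, 0]

/-- The bijection g transposing the states 3 and 4 (indices 2 and 3). -/
def g4 : Equiv.Perm (Fin 4) := Equiv.swap 2 3

/-! Started at 4, the kernel `K` moves to 3 with certainty, and the conjugated kernel
`K₂(x, y) = K(g x, g y)` moves 3 back to 4 with certainty, because `K₂(3, ·) = K(4, g ·)`.
So row 4 of `K_{0,n}` is a point mass alternating between 4 and 3. -/

theorem Matrix.mul_row_of_row_eq_single {l m n R : Type*} [Fintype m] [DecidableEq m]
    [NonAssocSemiring R] {A : Matrix l m R} {x : l} {z : m} (hA : A x = Pi.single z 1)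
    (B : Matrix m n R) : (A * B) x = B z := by
  rw [Matrix.mul_apply_eq_vecMul, hA, Matrix.single_one_vecMul, Matrix.row]

section Involution

variable {V : Type*} [Fintype V] (K : Matrix V V ℝ) {g : Equiv.Perm V}

theorem Kseq_odd (hg : g ^ 2 = 1) (n : ℕ) : Kseq K g (2 * n + 1) = K := by
  ext x y
  simp [Kseq, pow_mul, hg]

theorem Kseq_even_apply (hg : g ^ 2 = 1) (n : ℕ) (x y : V) :
    Kseq K g (2 * n + 2) x y = K (g x) (g y) := by
  simp [Kseq, pow_succ, pow_mul, hg]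

variable [DecidableEq V]

theorem Kcomp_row_eq_single (hg : g ^ 2 = 1) {x y : V} (hx : K x = Pi.single y 1)
    (hy : K (g y) = Pi.single (g x) 1) (n : ℕ) :
    Kcomp K g (2 * n) x = Pi.single x 1 ∧ Kcomp K g (2 * n + 1) x = Pi.single y 1 := by
  have h_odd : ∀ m, Kcomp K g (2 * m) x = Pi.single x 1 →
      Kcomp K g (2 * m + 1) x = Pi.single y 1 := fun m h => by
    rw [Kcomp, Matrix.mul_row_of_row_eq_single h, Kseq_odd K hg, hx]
  induction n with
  | zero =>
    have h_zero : Kcomp K g 0 x = Pi.single x 1 := by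
      ext w
      simp [Kcomp, Matrix.one_apply, Pi.single_apply, eq_comm]
    exact ⟨h_zero, h_odd 0 h_zero⟩
  | succ n ih =>
    have h_even : Kcomp K g (2 * (n + 1)) x = Pi.single x 1 := by
      ext w
      rw [mul_add, mul_one, Kcomp, Matrix.mul_row_of_row_eq_single ih.2, Kseq_even_apply K hg, hy]
      simp only [Pi.single_apply, g.apply_eq_iff_eq]
    exact ⟨h_even, h_odd _ h_even⟩

end Involution

/-- Example 3.5: K_{0,2n}(4,4) = 1 and K_{0,2n+1}(4,3) = 1 for all n ≥ 0. -/
theorem stmt12 :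
    ∀ n : ℕ, Kcomp K4 g4 (2 * n) 3 3 = 1 ∧ Kcomp K4 g4 (2 * n + 1) 3 2 = 1 := by
  intro n
  have hg : g4 ^ 2 = 1 := by rw [sq]; exact Equiv.swap_mul_self 2 3
  have h_row : K4 3 = Pi.single 2 1 := by
    ext w
    fin_cases w <;> simp [K4]
  obtain ⟨h_even, h_odd⟩ := Kcomp_row_eq_single K4 hg h_row (by simpa [g4] using h_row) n
  exact ⟨by simp [h_even], by simp [h_odd]⟩
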